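/- Let X be a linear order such that X ≅ ℤ·X (the ℤ-indexed lexicographic sum of copies of X). Then X ≅ ω·X, X ≅ ω*·X, and X ≅ n·X for every positive integer n. -/

import Mathlib

/-- Lindenbaum's theorem: if `A` embeds into `B` as an initial segment (lower set)
and `B` embeds into `A` as a final segment (upper set), then `A ≅ B`. -/
theorem lindenbaum' {A B : Type*} [LinearOrder A] [LinearOrder B]
    (f : A ↪o B) (g : B ↪o A) (hf : IsLowerSet (Set.range f))
    (hg : IsUpperSet (Set.range g)) : Nonempty (A ≃o B) := by
  classical
  set S : Set A := ⋃ n, (g ∘ f)^[n] '' (Set.range g)ᶜ with hS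
  have hC : IsLowerSet ((Set.range g)ᶜ : Set A) := hg.compl
  have hmapS : ∀ x ∈ S, g (f x) ∈ S := by
    intro x hx
    obtain ⟨m, c, hc, rfl⟩ := by simpa only [hS, Set.mem_iUnion, Set.mem_image] using hx
    refine Set.mem_iUnion.2 ⟨m + 1, c, hc, ?_⟩
    rw [Function.iterate_succ_apply']
    rfl
  have key : ∀ n, ∀ x ∈ (g ∘ f)^[n] '' (Set.range g)ᶜ, ∀ y ≤ x, y ∈ S := by
    intro n
    induction n with
    | zero =>
      intro x hx y hyx
      simp only [Function.iterate_zero, Set.image_id] at hx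
      exact Set.mem_iUnion.2 ⟨0, by simpa using hC hyx hx⟩
    | succ n ih =>
      intro x hx y hyx
      obtain ⟨c, hc, rfl⟩ := hx
      rw [Function.iterate_succ_apply'] at hyx
      by_cases hyg : y ∈ Set.range g
      · obtain ⟨b, rfl⟩ := hyg
        have hb : b ≤ f ((g ∘ f)^[n] c) := g.le_iff_le.1 hyx
        obtain ⟨a, rfl⟩ := hf hb ⟨_, rfl⟩
        have ha : a ≤ (g ∘ f)^[n] c := f.le_iff_le.1 hb
        exact hmapS a (ih _ ⟨c, hc, rfl⟩ a ha)
      · exact Set.mem_iUnion.2 ⟨0, by simpa using hyg⟩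
  have hSlow : IsLowerSet S := by
    intro x y hyx hx
    obtain ⟨n, hn⟩ := Set.mem_iUnion.1 hx
    exact key n x hn y hyx
  have hout : ∀ x, x ∉ S → ∃ b, g b = x := by
    intro x hx
    by_contra hc
    exact hx (Set.mem_iUnion.2 ⟨0, by simpa using fun b => (fun hb => hc ⟨b, hb⟩)⟩)
  let φ : A → B := fun x => if hx : x ∈ S then f x else (hout x hx).choose
  have hφ_in : ∀ x (hx : x ∈ S), φ x = f x := fun x hx => dif_pos hx
  have hφ_out : ∀ x (hx : x ∉ S), g (φ x) = x := by
    intro x hx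
    simp only [φ, dif_neg hx]
    exact (hout x hx).choose_spec
  have hmono : StrictMono φ := by
    intro x y hxy
    by_cases hx : x ∈ S <;> by_cases hy : y ∈ S
    · rw [hφ_in x hx, hφ_in y hy]; exact f.strictMono hxy
    · rw [hφ_in x hx]
      have h1 : g (f x) < y := by
        rcases lt_or_ge (g (f x)) y with h' | h'
        · exact h'
        · exact absurd (hSlow h' (hmapS x hx)) hy
      rw [← hφ_out y hy] at h1
      exact g.lt_iff_lt.1 h1
    · exact absurd (hSlow hxy.le hy) hx
    · have : g (φ x) < g (φ y) := by rw [hφ_out x hx, hφ_out y hy]; exact hxy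
      exact g.lt_iff_lt.1 this
  have hsurj : Function.Surjective φ := by
    intro b
    by_cases hgb : g b ∈ S
    · obtain ⟨n, c, hc, hcb⟩ := by
        simpa only [hS, Set.mem_iUnion, Set.mem_image] using hgb
      cases n with
      | zero => exact absurd ⟨b, hcb.symm⟩ hc
      | succ m =>
        rw [Function.iterate_succ_apply'] at hcb
        have haS : (g ∘ f)^[m] c ∈ S := Set.mem_iUnion.2 ⟨m, c, hc, rfl⟩
        have hb : f ((g ∘ f)^[m] c) = b := g.injective hcb
        exact ⟨(g ∘ f)^[m] c, by rw [hφ_in _ haS, hb]⟩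
    · exact ⟨g b, g.injective (by rw [hφ_out _ hgb])⟩
  exact ⟨StrictMono.orderIsoOfSurjective φ hmono hsurj⟩

theorem iso_nat_lex_of_Z {X : Type*} [LinearOrder X] (e : X ≃o ℤ ×ₗ X) :
    Nonempty (X ≃o ℕ ×ₗ X) := by
  refine lindenbaum'
    (OrderEmbedding.ofStrictMono (fun x : X => toLex ((0 : ℕ), x)) ?_)
    (OrderEmbedding.ofStrictMono
      (fun p : ℕ ×ₗ X => e.symm (toLex (((ofLex p).1 : ℤ), (ofLex p).2))) ?_) ?_ ?_
  · intro a b hab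
    exact Prod.Lex.lt_iff.2 (Or.inr ⟨rfl, hab⟩)
  · intro p q hpq
    apply e.symm.strictMono
    rcases Prod.Lex.lt_iff.1 hpq with h1 | ⟨h1, h2⟩
    · exact Prod.Lex.lt_iff.2
        (Or.inl (show ((ofLex p).1 : ℤ) < (ofLex q).1 by exact_mod_cast h1))
    · exact Prod.Lex.lt_iff.2
        (Or.inr ⟨show ((ofLex p).1 : ℤ) = (ofLex q).1 by exact_mod_cast h1, h2⟩)
  · rintro p q hqp ⟨x, rfl⟩
    rcases Prod.Lex.le_iff.1 hqp with h1 | ⟨h1, h2⟩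
    · exact absurd h1 (Nat.not_lt_zero _)
    · refine ⟨(ofLex q).2, ?_⟩
      show toLex ((0:ℕ), (ofLex q).2) = q
      have h1' : (ofLex q).1 = 0 := h1
      exact congrArg toLex (Prod.ext h1'.symm rfl)
  · rintro a b hab ⟨p, rfl⟩
    have h1 : toLex (((ofLex p).1 : ℤ), (ofLex p).2) ≤ e b := by
      simpa using e.monotone (show e.symm (toLex (((ofLex p).1 : ℤ), (ofLex p).2)) ≤ b from hab)
    have h2 : (0 : ℤ) ≤ (ofLex (e b)).1 := by
      rcases Prod.Lex.le_iff.1 h1 with h' | ⟨h', _⟩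
      · exact le_of_lt (lt_of_le_of_lt (Int.ofNat_nonneg _) h')
      · exact h' ▸ Int.ofNat_nonneg _
    refine ⟨toLex ((ofLex (e b)).1.toNat, (ofLex (e b)).2), ?_⟩
    show e.symm (toLex ((((ofLex (e b)).1.toNat : ℕ) : ℤ), (ofLex (e b)).2)) = b
    have h3 : (((((ofLex (e b)).1.toNat) : ℕ) : ℤ), (ofLex (e b)).2) = ofLex (e b) :=
      Prod.ext (Int.toNat_of_nonneg h2) rfl
    rw [h3]
    simp

theorem iso_natOD_lex_of_Z {X : Type*} [LinearOrder X] (e : X ≃o ℤ ×ₗ X) :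
    Nonempty (X ≃o ℕᵒᵈ ×ₗ X) := by
  have := lindenbaum'
    (OrderEmbedding.ofStrictMono
      (fun p : ℕᵒᵈ ×ₗ X =>
        e.symm (toLex ((-(OrderDual.ofDual (ofLex p).1) : ℤ), (ofLex p).2))) ?_)
    (OrderEmbedding.ofStrictMono
      (fun x : X => toLex ((OrderDual.toDual 0 : ℕᵒᵈ), x)) ?_) ?_ ?_
  · exact ⟨this.some.symm⟩
  · intro p q hpq
    apply e.symm.strictMono
    rcases Prod.Lex.lt_iff.1 hpq with h1 | ⟨h1, h2⟩
    · refine Prod.Lex.lt_iff.2 (Or.inl ?_)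
      have h1' : (OrderDual.ofDual (ofLex q).1 : ℕ) < OrderDual.ofDual (ofLex p).1 := h1
      show (-(OrderDual.ofDual (ofLex p).1) : ℤ) < -(OrderDual.ofDual (ofLex q).1)
      omega
    · refine Prod.Lex.lt_iff.2 (Or.inr ⟨?_, h2⟩)
      have h1' : (ofLex p).1 = (ofLex q).1 := h1
      show (-(OrderDual.ofDual (ofLex p).1) : ℤ) = -(OrderDual.ofDual (ofLex q).1)
      rw [h1']
  · intro a b hab
    exact Prod.Lex.lt_iff.2 (Or.inr ⟨rfl, hab⟩)
  · rintro a c hca ⟨p, rfl⟩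
    have h1 : e c ≤ toLex ((-(OrderDual.ofDual (ofLex p).1) : ℤ), (ofLex p).2) := by
      simpa using e.monotone
        (show c ≤ e.symm (toLex ((-(OrderDual.ofDual (ofLex p).1) : ℤ), (ofLex p).2)) from hca)
    have h2 : (ofLex (e c)).1 ≤ 0 := by
      rcases Prod.Lex.le_iff.1 h1 with h' | ⟨h', _⟩
      · have : (-(OrderDual.ofDual (ofLex p).1) : ℤ) ≤ 0 := by omega
        exact le_of_lt (lt_of_lt_of_le h' this)
      · have h'' : (ofLex (e c)).1 = (-(OrderDual.ofDual (ofLex p).1) : ℤ) := h'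
        omega
    refine ⟨toLex (OrderDual.toDual (-(ofLex (e c)).1).toNat, (ofLex (e c)).2), ?_⟩
    show e.symm (toLex ((-(((-(ofLex (e c)).1).toNat : ℕ) : ℤ)), (ofLex (e c)).2)) = c
    have h3 : ((((-(ofLex (e c)).1).toNat : ℕ)) : ℤ) = -(ofLex (e c)).1 :=
      Int.toNat_of_nonneg (by omega)
    rw [h3, neg_neg]
    have h4 : ((ofLex (e c)).1, (ofLex (e c)).2) = ofLex (e c) := rfl
    rw [h4]
    simp
  · rintro a b hab ⟨x, rfl⟩
    rcases Prod.Lex.le_iff.1 hab with h1 | ⟨h1, h2⟩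
    · have h1' : (OrderDual.ofDual (ofLex b).1 : ℕ) < 0 := h1
      exact absurd h1' (Nat.not_lt_zero _)
    · refine ⟨(ofLex b).2, ?_⟩
      have h1' : (OrderDual.toDual 0 : ℕᵒᵈ) = (ofLex b).1 := h1
      show toLex ((OrderDual.toDual 0 : ℕᵒᵈ), (ofLex b).2) = b
      exact congrArg toLex (Prod.ext h1' rfl)

theorem iso_fin_lex_of_natOD {X : Type*} [LinearOrder X] (E2 : X ≃o ℕᵒᵈ ×ₗ X)
    (n : ℕ) (hn : 0 < n) : Nonempty (X ≃o Fin n ×ₗ X) := by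
  refine lindenbaum'
    (OrderEmbedding.ofStrictMono (fun x : X => toLex ((⟨0, hn⟩ : Fin n), x)) ?_)
    (OrderEmbedding.ofStrictMono
      (fun p : Fin n ×ₗ X =>
        E2.symm (toLex (OrderDual.toDual (n - 1 - ((ofLex p).1 : ℕ)), (ofLex p).2))) ?_)
    ?_ ?_
  · intro a b hab
    exact Prod.Lex.lt_iff.2 (Or.inr ⟨rfl, hab⟩)
  · intro p q hpq
    apply E2.symm.strictMono
    rcases Prod.Lex.lt_iff.1 hpq with h1 | ⟨h1, h2⟩
    · refine Prod.Lex.lt_iff.2 (Or.inl ?_)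
      have h1' : ((ofLex p).1 : ℕ) < ((ofLex q).1 : ℕ) := h1
      have hq : ((ofLex q).1 : ℕ) < n := (ofLex q).1.isLt
      show OrderDual.toDual (n - 1 - ((ofLex p).1 : ℕ)) <
        OrderDual.toDual (n - 1 - ((ofLex q).1 : ℕ))
      rw [OrderDual.toDual_lt_toDual]
      omega
    · refine Prod.Lex.lt_iff.2 (Or.inr ⟨?_, h2⟩)
      have h1' : (ofLex p).1 = (ofLex q).1 := h1
      show OrderDual.toDual (n - 1 - ((ofLex p).1 : ℕ)) =
        OrderDual.toDual (n - 1 - ((ofLex q).1 : ℕ))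
      rw [h1']
  · rintro p q hqp ⟨x, rfl⟩
    rcases Prod.Lex.le_iff.1 hqp with h1 | ⟨h1, h2⟩
    · have h1' : ((ofLex q).1 : ℕ) < 0 := h1
      exact absurd h1' (Nat.not_lt_zero _)
    · refine ⟨(ofLex q).2, ?_⟩
      have h1' : (⟨0, hn⟩ : Fin n) = (ofLex q).1 := h1.symm
      show toLex ((⟨0, hn⟩ : Fin n), (ofLex q).2) = q
      exact congrArg toLex (Prod.ext h1' rfl)
  · rintro a b hab ⟨p, rfl⟩
    have h1 : toLex (OrderDual.toDual (n - 1 - ((ofLex p).1 : ℕ)), (ofLex p).2)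
        ≤ E2 b := by simpa using E2.monotone hab
    have h2 : (OrderDual.ofDual (ofLex (E2 b)).1 : ℕ) ≤ n - 1 := by
      rcases Prod.Lex.le_iff.1 h1 with h' | ⟨h', _⟩
      · have h'' : (OrderDual.ofDual (ofLex (E2 b)).1 : ℕ) < n - 1 - ((ofLex p).1 : ℕ) := h'
        omega
      · have h'' : (n - 1 - ((ofLex p).1 : ℕ)) = OrderDual.ofDual (ofLex (E2 b)).1 := h'
        omega
    set m : ℕ := OrderDual.ofDual (ofLex (E2 b)).1 with hm
    refine ⟨toLex ((⟨n - 1 - m, by omega⟩ : Fin n), (ofLex (E2 b)).2), ?_⟩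
    show E2.symm (toLex (OrderDual.toDual (n - 1 - (n - 1 - m)), (ofLex (E2 b)).2)) = b
    have h3 : n - 1 - (n - 1 - m) = m := by omega
    rw [h3]
    have h4 : (OrderDual.toDual m, (ofLex (E2 b)).2) = ofLex (E2 b) := rfl
    rw [h4]
    simp

/-- If a linear order `X` satisfies `X ≅ ℤ·X` (lexicographic sum of `ℤ`-many copies of
`X`), then `X ≅ ω·X`, `X ≅ ω*·X`, and `X ≅ n·X` for every positive integer `n`. -/
theorem sums_iso_of_Z_sum_iso {X : Type*} [LinearOrder X]
    (h : Nonempty (X ≃o ℤ ×ₗ X)) :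
    Nonempty (X ≃o ℕ ×ₗ X) ∧
    Nonempty (X ≃o ℕᵒᵈ ×ₗ X) ∧
    ∀ n : ℕ, 0 < n → Nonempty (X ≃o Fin n ×ₗ X) := by
  obtain ⟨e⟩ := h
  refine ⟨iso_nat_lex_of_Z e, iso_natOD_lex_of_Z e, fun n hn => ?_⟩
  obtain ⟨E2⟩ := iso_natOD_lex_of_Z e
  exact iso_fin_lex_of_natOD E2 n hn
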